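/- Fix masses m, M with 2M > m > 0. There exists C > 0, depending only on m and M, such that for all nonzero ξ₁, ξ₂ ∈ ℝ³ and all signs s₁, s₂ ∈ {+1,−1}: |μ^{s₁,s₂}(ξ₁,ξ₂)| ≥ C⁻¹ min(⟨ξ₁⟩, ⟨ξ₂⟩) · ∠(s₁ξ₁, s₂ξ₂)², where ⟨·⟩ := ⟨·⟩₁. -/

import Mathlib

/-!
Write `a = ⟨ξ₁⟩_M`, `b = ⟨ξ₂⟩_M`, `ζᵢ = sᵢ • ξᵢ`, and let `X` be `μ` with the signs of both
`M`-brackets flipped. Then `μ X = m² - 2M² + 2 s₁ s₂ (a b - ⟪ζ₁, ζ₂⟫)`.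
Since `a b - ⟪ζ₁, ζ₂⟫ ≥ M²` and `|m² - 2M²| < 2M²`, the right-hand side is comparable to
`a b - ⟪ζ₁, ζ₂⟫ ≥ a b (1 - cos ∠(ζ₁, ζ₂)) / 2 ≳ a b ∠(ζ₁, ζ₂)²`, while `|X| ≲ max a b`.
Dividing gives `|μ| ≳ min a b · ∠(ζ₁, ζ₂)²`.
-/

noncomputable section

/-- The Japanese bracket `⟨ξ⟩_a := √(|ξ|² + a²)` for `ξ ∈ ℝ³`, `a ≥ 0`. -/
def jbracket (a : ℝ) (ξ : EuclideanSpace ℝ (Fin 3)) : ℝ :=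
  Real.sqrt (‖ξ‖ ^ 2 + a ^ 2)

/-- The resonance function `μ^{s₁,s₂}(ξ₁,ξ₂) := ⟨ξ₁−ξ₂⟩_m + s₁⟨ξ₁⟩_M − s₂⟨ξ₂⟩_M`. -/
def resonance (m M s₁ s₂ : ℝ) (ξ₁ ξ₂ : EuclideanSpace ℝ (Fin 3)) : ℝ :=
  jbracket m (ξ₁ - ξ₂) + s₁ * jbracket M ξ₁ - s₂ * jbracket M ξ₂

open Real InnerProductGeometry

def resonanceConj (m M s₁ s₂ : ℝ) (ξ₁ ξ₂ : EuclideanSpace ℝ (Fin 3)) : ℝ :=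
  jbracket m (ξ₁ - ξ₂) - s₁ * jbracket M ξ₁ + s₂ * jbracket M ξ₂

lemma one_sub_mul_le_two_mul_sub {p q t : ℝ} (hp : 0 ≤ p) (hpq : p ≤ q) (ht₀ : -1 ≤ t)
    (ht₁ : t ≤ 1) : (1 - t) * q ≤ 2 * (q - p * t) := by
  rcases le_total 0 t with ht | ht <;> nlinarith

section jbracket

variable (a : ℝ) (ξ : EuclideanSpace ℝ (Fin 3))

lemma jbracket_nonneg : 0 ≤ jbracket a ξ := Real.sqrt_nonneg _

lemma sq_jbracket : jbracket a ξ ^ 2 = ‖ξ‖ ^ 2 + a ^ 2 := Real.sq_sqrt (by positivity)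

lemma norm_le_jbracket : ‖ξ‖ ≤ jbracket a ξ :=
  Real.le_sqrt_of_sq_le (by nlinarith [sq_nonneg a])

lemma le_jbracket : a ≤ jbracket a ξ :=
  Real.le_sqrt_of_sq_le (by nlinarith [sq_nonneg ‖ξ‖])

variable {a}

lemma jbracket_le_norm_add (ha : 0 ≤ a) : jbracket a ξ ≤ ‖ξ‖ + a :=
  Real.sqrt_le_iff.2 ⟨by positivity, by nlinarith [norm_nonneg ξ]⟩

lemma min_one_mul_jbracket_one_le (ha : 0 ≤ a) : min a 1 * jbracket 1 ξ ≤ jbracket a ξ := by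
  have hmin : 0 ≤ min a 1 := le_min ha zero_le_one
  rw [jbracket, jbracket, ← Real.sqrt_sq hmin, ← Real.sqrt_mul (sq_nonneg _)]
  refine Real.sqrt_le_sqrt ?_
  have h₁ : min a 1 ^ 2 ≤ 1 := pow_le_one₀ hmin (min_le_right _ _)
  have h₂ : min a 1 ^ 2 ≤ a ^ 2 := pow_le_pow_left₀ hmin (min_le_left _ _) 2
  nlinarith [sq_nonneg ‖ξ‖]

lemma jbracket_smul {s : ℝ} (hs : |s| = 1) : jbracket a (s • ξ) = jbracket a ξ := by
  rw [jbracket, jbracket, norm_smul, Real.norm_eq_abs, hs, one_mul]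

variable (a) (η : EuclideanSpace ℝ (Fin 3))

lemma sq_add_inner_le_jbracket_mul : a ^ 2 + inner ℝ ξ η ≤ jbracket a ξ * jbracket a η := by
  have hprod : ‖ξ‖ * ‖η‖ + a ^ 2 ≤ jbracket a ξ * jbracket a η := by
    refine abs_le_of_sq_le_sq' ?_ (mul_nonneg (jbracket_nonneg a ξ) (jbracket_nonneg a η)) |>.2
    rw [mul_pow, sq_jbracket, sq_jbracket]
    nlinarith [sq_nonneg (‖ξ‖ - ‖η‖), sq_nonneg a]
  linarith [real_inner_le_norm ξ η]

lemma jbracket_mul_mul_angle_sq_le :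
    jbracket a ξ * jbracket a η * angle ξ η ^ 2 ≤
      π ^ 2 * (jbracket a ξ * jbracket a η - inner ℝ ξ η) := by
  set θ := angle ξ η
  have hjordan : 2 / π ^ 2 * θ ^ 2 ≤ 1 - Real.cos θ := by
    have := Real.cos_le_one_sub_mul_cos_sq (x := θ)
      (abs_le.2 ⟨by linarith [pi_pos, angle_nonneg ξ η], angle_le_pi ξ η⟩)
    linarith
  have hkey := one_sub_mul_le_two_mul_sub (mul_nonneg (norm_nonneg ξ) (norm_nonneg η))
    (mul_le_mul (norm_le_jbracket a ξ) (norm_le_jbracket a η) (norm_nonneg η)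
      (jbracket_nonneg a ξ)) (neg_one_le_cos θ) (cos_le_one θ)
  rw [mul_comm _ (Real.cos θ), cos_angle_mul_norm_mul_norm] at hkey
  have hab := mul_nonneg (jbracket_nonneg a ξ) (jbracket_nonneg a η)
  calc jbracket a ξ * jbracket a η * θ ^ 2
      = π ^ 2 / 2 * (2 / π ^ 2 * θ ^ 2 * (jbracket a ξ * jbracket a η)) := by
        field_simp
    _ ≤ π ^ 2 / 2 * (2 * (jbracket a ξ * jbracket a η - inner ℝ ξ η)) := by
        exact mul_le_mul_of_nonneg_left ((mul_le_mul_of_nonneg_right hjordan hab).trans hkey)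
          (by positivity)
    _ = π ^ 2 * (jbracket a ξ * jbracket a η - inner ℝ ξ η) := by ring

end jbracket

lemma mul_le_abs_add_two_mul {α ε M Q : ℝ} (hM : 0 < M) (hQ : M ^ 2 ≤ Q) (hε : |ε| = 1) :
    (2 - |α| / M ^ 2) * Q ≤ |α + 2 * ε * Q| := by
  have hα : |α| / M ^ 2 * Q ≥ |α| := by
    rw [div_mul_eq_mul_div, ge_iff_le, le_div_iff₀ (by positivity)]
    exact mul_le_mul_of_nonneg_left hQ (abs_nonneg α)
  have hεQ : |2 * ε * Q| = 2 * Q := by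
    rw [abs_mul, abs_mul, hε, abs_two, abs_of_nonneg (by nlinarith)]; ring
  have := abs_sub_abs_le_abs_sub (2 * ε * Q) (-α)
  rw [abs_neg, hεQ, sub_neg_eq_add, add_comm] at this
  linarith

section resonance

variable {m M s₁ s₂ : ℝ} (ξ₁ ξ₂ : EuclideanSpace ℝ (Fin 3))

lemma resonance_mul_resonanceConj (hs₁ : |s₁| = 1) (hs₂ : |s₂| = 1) :
    resonance m M s₁ s₂ ξ₁ ξ₂ * resonanceConj m M s₁ s₂ ξ₁ ξ₂ =
      m ^ 2 - 2 * M ^ 2 +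
        2 * (s₁ * s₂) * (jbracket M ξ₁ * jbracket M ξ₂ - inner ℝ (s₁ • ξ₁) (s₂ • ξ₂)) := by
  have hs₁' : s₁ ^ 2 = 1 := by rw [← sq_abs, hs₁, one_pow]
  have hs₂' : s₂ ^ 2 = 1 := by rw [← sq_abs, hs₂, one_pow]
  rw [resonance, resonanceConj, real_inner_smul_left, real_inner_smul_right]
  linear_combination sq_jbracket m (ξ₁ - ξ₂) + norm_sub_sq_real ξ₁ ξ₂ - sq_jbracket M ξ₁ -
    sq_jbracket M ξ₂ - jbracket M ξ₁ ^ 2 * hs₁' - jbracket M ξ₂ ^ 2 * hs₂' +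
    2 * inner ℝ ξ₁ ξ₂ * (s₂ ^ 2 * hs₁' + hs₂')

lemma abs_resonanceConj_le (hm : 0 ≤ m) (hmM : m ≤ 2 * M) (hs₁ : |s₁| = 1) (hs₂ : |s₂| = 1) :
    |resonanceConj m M s₁ s₂ ξ₁ ξ₂| ≤ 6 * max (jbracket M ξ₁) (jbracket M ξ₂) := by
  set a := jbracket M ξ₁
  set b := jbracket M ξ₂
  have hc : jbracket m (ξ₁ - ξ₂) ≤ a + b + m := by
    linarith [jbracket_le_norm_add (ξ₁ - ξ₂) hm, norm_sub_le ξ₁ ξ₂, norm_le_jbracket M ξ₁,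
      norm_le_jbracket M ξ₂]
  have ha := abs_le.1 (show |s₁ * a| = a by
    rw [abs_mul, hs₁, one_mul, abs_of_nonneg (jbracket_nonneg M ξ₁)]).le
  have hb := abs_le.1 (show |s₂ * b| = b by
    rw [abs_mul, hs₂, one_mul, abs_of_nonneg (jbracket_nonneg M ξ₂)]).le
  have hMa : M ≤ max a b := (le_jbracket M ξ₁).trans (le_max_left a b)
  rw [resonanceConj, abs_le]
  constructor <;>
    linarith [jbracket_nonneg m (ξ₁ - ξ₂), le_max_left a b, le_max_right a b]

lemma two_sub_abs_sq_sub_two_mul_sq_div_pos (hm : 0 < m) (hmM : m < 2 * M) :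
    0 < 2 - |m ^ 2 - 2 * M ^ 2| / M ^ 2 := by
  have hM : 0 < M := by linarith
  rw [sub_pos, div_lt_iff₀ (by positivity), abs_sub_lt_iff]
  constructor <;> nlinarith

lemma mul_min_jbracket_mul_angle_sq_le_abs_resonance (hm : 0 < m) (hmM : m < 2 * M)
    (hs₁ : |s₁| = 1) (hs₂ : |s₂| = 1) :
    (2 - |m ^ 2 - 2 * M ^ 2| / M ^ 2) * min (jbracket M ξ₁) (jbracket M ξ₂) *
        angle (s₁ • ξ₁) (s₂ • ξ₂) ^ 2 ≤ 6 * π ^ 2 * |resonance m M s₁ s₂ ξ₁ ξ₂| := by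
  have hM : 0 < M := by linarith
  set κ := 2 - |m ^ 2 - 2 * M ^ 2| / M ^ 2
  have hκ : 0 ≤ κ := (two_sub_abs_sq_sub_two_mul_sq_div_pos hm hmM).le
  set a := jbracket M ξ₁
  set b := jbracket M ξ₂
  set θ := angle (s₁ • ξ₁) (s₂ • ξ₂)
  set Q := a * b - inner ℝ (s₁ • ξ₁) (s₂ • ξ₂)
  have hQ : M ^ 2 ≤ Q := by
    have := sq_add_inner_le_jbracket_mul M (s₁ • ξ₁) (s₂ • ξ₂)
    rw [jbracket_smul ξ₁ hs₁, jbracket_smul ξ₂ hs₂] at this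
    linarith
  have hangle : a * b * θ ^ 2 ≤ π ^ 2 * Q := by
    have := jbracket_mul_mul_angle_sq_le M (s₁ • ξ₁) (s₂ • ξ₂)
    rwa [jbracket_smul ξ₁ hs₁, jbracket_smul ξ₂ hs₂] at this
  have hprod : κ * Q ≤ |resonance m M s₁ s₂ ξ₁ ξ₂| * |resonanceConj m M s₁ s₂ ξ₁ ξ₂| := by
    rw [← abs_mul, resonance_mul_resonanceConj ξ₁ ξ₂ hs₁ hs₂]
    exact mul_le_abs_add_two_mul hM hQ (by rw [abs_mul, hs₁, hs₂, one_mul])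
  have hconj := abs_resonanceConj_le ξ₁ ξ₂ hm.le hmM.le hs₁ hs₂
  have hmax : 0 < max a b := hM.trans_le ((le_jbracket M ξ₁).trans (le_max_left a b))
  refine le_of_mul_le_mul_right ?_ hmax
  calc κ * min a b * θ ^ 2 * max a b = κ * (a * b * θ ^ 2) := by rw [← min_mul_max a b]; ring
    _ ≤ κ * (π ^ 2 * Q) := mul_le_mul_of_nonneg_left hangle hκ
    _ = π ^ 2 * (κ * Q) := by ring
    _ ≤ π ^ 2 * (|resonance m M s₁ s₂ ξ₁ ξ₂| * (6 * max a b)) :=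
        mul_le_mul_of_nonneg_left (hprod.trans (mul_le_mul_of_nonneg_left hconj (abs_nonneg _)))
          (sq_nonneg π)
    _ = 6 * π ^ 2 * |resonance m M s₁ s₂ ξ₁ ξ₂| * max a b := by ring

end resonance

/-- General lower bound: for all signs,
`|μ^{s₁,s₂}(ξ₁,ξ₂)| ≳ min(⟨ξ₁⟩,⟨ξ₂⟩)·∠(s₁ξ₁,s₂ξ₂)²`. -/
theorem resonance_general_lower_bound (m M : ℝ) (hm : 0 < m) (hmM : m < 2 * M) :
    ∃ C > (0 : ℝ),
      ∀ ξ₁ ξ₂ : EuclideanSpace ℝ (Fin 3), ξ₁ ≠ 0 → ξ₂ ≠ 0 → ∀ s₁ s₂ : ℝ,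
        (s₁ = 1 ∨ s₁ = -1) → (s₂ = 1 ∨ s₂ = -1) →
        |resonance m M s₁ s₂ ξ₁ ξ₂| ≥
          C⁻¹ * min (jbracket 1 ξ₁) (jbracket 1 ξ₂) *
            InnerProductGeometry.angle (s₁ • ξ₁) (s₂ • ξ₂) ^ 2 := by
  have hM : 0 < M := by linarith
  set κ := 2 - |m ^ 2 - 2 * M ^ 2| / M ^ 2
  have hκ : 0 < κ := two_sub_abs_sq_sub_two_mul_sq_div_pos hm hmM
  refine ⟨6 * π ^ 2 / (κ * min M 1), by positivity, ?_⟩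
  intro ξ₁ ξ₂ _ _ s₁ s₂ hs₁ hs₂
  have hmin : min M 1 * min (jbracket 1 ξ₁) (jbracket 1 ξ₂) ≤
      min (jbracket M ξ₁) (jbracket M ξ₂) := by
    rw [mul_min_of_nonneg _ _ (le_min hM.le zero_le_one)]
    exact min_le_min (min_one_mul_jbracket_one_le ξ₁ hM.le) (min_one_mul_jbracket_one_le ξ₂ hM.le)
  have key := mul_min_jbracket_mul_angle_sq_le_abs_resonance ξ₁ ξ₂ hm hmM
    ((abs_eq zero_le_one).2 hs₁) ((abs_eq zero_le_one).2 hs₂)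
  rw [inv_div, ge_iff_le, div_mul_eq_mul_div, div_mul_eq_mul_div, div_le_iff₀ (by positivity)]
  calc κ * min M 1 * min (jbracket 1 ξ₁) (jbracket 1 ξ₂) * angle (s₁ • ξ₁) (s₂ • ξ₂) ^ 2
      ≤ κ * min (jbracket M ξ₁) (jbracket M ξ₂) * angle (s₁ • ξ₁) (s₂ • ξ₂) ^ 2 := by
        rw [mul_assoc κ]; gcongr
    _ ≤ 6 * π ^ 2 * |resonance m M s₁ s₂ ξ₁ ξ₂| := key
    _ = |resonance m M s₁ s₂ ξ₁ ξ₂| * (6 * π ^ 2) := mul_comm _ _
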